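/- Let ℓ be an odd prime and let G be a subgroup of N_sp (so every element of G is diagonal or antidiagonal) such that every element of G is either a scalar matrix or has irreducible characteristic polynomial over F_ℓ. Then G is contained in a conjugate of the nonsplit Cartan subgroup C_ns. -/

import Mathlib

open Matrix

abbrev GL2 (ℓ : ℕ) : Type := GL (Fin 2) (ZMod ℓ)

/-- The underlying matrix of an element of `GL₂(F_ℓ)`. -/
def mat {ℓ : ℕ} (g : GL2 ℓ) : Matrix (Fin 2) (Fin 2) (ZMod ℓ) := g

/-- `g` is a diagonal matrix. -/
def IsDiag {ℓ : ℕ} (g : GL2 ℓ) : Prop := mat g 0 1 = 0 ∧ mat g 1 0 = 0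

/-- `g` is an antidiagonal matrix. -/
def IsAnti {ℓ : ℕ} (g : GL2 ℓ) : Prop := mat g 0 0 = 0 ∧ mat g 1 1 = 0

/-- `g` is a scalar matrix. -/
def IsScalar {ℓ : ℕ} (g : GL2 ℓ) : Prop :=
  ∃ c : ZMod ℓ, mat g = c • (1 : Matrix (Fin 2) (Fin 2) (ZMod ℓ))

/-- Membership in the split Cartan subgroup `C_sp` (the diagonal matrices). -/
def InCsp {ℓ : ℕ} (g : GL2 ℓ) : Prop := IsDiag g

/-- Membership in the normalizer `N_sp` of the split Cartan (diagonal or antidiagonal). -/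
def InNsp {ℓ : ℕ} (g : GL2 ℓ) : Prop := IsDiag g ∨ IsAnti g

/-- Membership in the nonsplit Cartan `C_ns` w.r.t. the nonresidue `δ`:
matrices of the form `[[a, δb], [b, a]]`. -/
def InCns {ℓ : ℕ} (δ : ZMod ℓ) (g : GL2 ℓ) : Prop :=
  mat g 1 1 = mat g 0 0 ∧ mat g 0 1 = δ * mat g 1 0

/-- Membership in `N_ns \ C_ns` (as a matrix shape): `[[a, -δb], [b, -a]]`. -/
def InNnsAnti {ℓ : ℕ} (δ : ZMod ℓ) (g : GL2 ℓ) : Prop :=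
  mat g 1 1 = - mat g 0 0 ∧ mat g 0 1 = - (δ * mat g 1 0)

/-- Membership in the normalizer `N_ns` of the nonsplit Cartan. -/
def InNns {ℓ : ℕ} (δ : ZMod ℓ) (g : GL2 ℓ) : Prop := InCns δ g ∨ InNnsAnti δ g

/-- `PGL₂(F_ℓ)`: the quotient of `GL₂(F_ℓ)` by its center (the scalar matrices). -/
abbrev PGL2 (ℓ : ℕ) : Type := GL2 ℓ ⧸ Subgroup.center (GL2 ℓ)

/-- The natural projection `GL₂(F_ℓ) →* PGL₂(F_ℓ)`. -/
def toPGL (ℓ : ℕ) : GL2 ℓ →* PGL2 ℓ := QuotientGroup.mk' _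

/-- The image of a subgroup of `GL₂(F_ℓ)` in `PGL₂(F_ℓ)`. -/
def projImage {ℓ : ℕ} (G : Subgroup (GL2 ℓ)) : Subgroup (PGL2 ℓ) := G.map (toPGL ℓ)

/-- `H` is isomorphic to the alternating group `A₄`. -/
def IsA4 {ℓ : ℕ} (H : Subgroup (PGL2 ℓ)) : Prop := Nonempty (H ≃* alternatingGroup (Fin 4))

/-- `H` is isomorphic to the symmetric group `S₄`. -/
def IsS4 {ℓ : ℕ} (H : Subgroup (PGL2 ℓ)) : Prop := Nonempty (H ≃* Equiv.Perm (Fin 4))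

/-- `H` is isomorphic to the alternating group `A₅`. -/
def IsA5 {ℓ : ℕ} (H : Subgroup (PGL2 ℓ)) : Prop := Nonempty (H ≃* alternatingGroup (Fin 5))

/-!
A diagonal matrix has its entries as eigenvalues, so the diagonal elements of `G` are scalar.
An antidiagonal element `[[0, b], [c, 0]]` has characteristic polynomial `X² - bc`, so `bc` is a
nonresidue. The product of two antidiagonal elements of `G` is diagonal, hence scalar, which forces
the ratio `b / c` to be the same for all antidiagonal elements. As `δ · bc` is a square, this
common ratio is `δ s²`, and conjugation by `diag(s⁻¹, 1)` then puts every antidiagonal element in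
the shape `[[0, δb'], [b', 0]]` while fixing the scalars.
-/

namespace Matrix

variable {K : Type*} [Field K]

lemma eval_charpoly_fin_two (M : Matrix (Fin 2) (Fin 2) K) (x : K) :
    M.charpoly.eval x = x ^ 2 - M.trace * x + M.det := by
  simp [charpoly_fin_two]

lemma not_isRoot_charpoly_fin_two {M : Matrix (Fin 2) (Fin 2) K} (hM : Irreducible M.charpoly)
    (x : K) : x ^ 2 - M.trace * x + M.det ≠ 0 := by
  rw [← eval_charpoly_fin_two]
  exact hM.not_isRoot_of_natDegree_ne_one (by simp [charpoly_natDegree_eq_dim])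

lemma not_irreducible_charpoly_of_apply_zero_one_eq_zero {M : Matrix (Fin 2) (Fin 2) K}
    (h : M 0 1 = 0) : ¬Irreducible M.charpoly := fun hM ↦
  not_isRoot_charpoly_fin_two hM (M 0 0) <| by
    rw [trace_fin_two, det_fin_two, h]; ring

lemma not_isSquare_neg_det_of_irreducible_charpoly {M : Matrix (Fin 2) (Fin 2) K}
    (hM : Irreducible M.charpoly) (htr : M.trace = 0) : ¬IsSquare (-M.det) := by
  rintro ⟨t, ht⟩
  exact not_isRoot_charpoly_fin_two hM t (by rw [htr]; linear_combination -ht)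

end Matrix

lemma FiniteField.isSquare_mul_of_not_isSquare {F : Type*} [Field F] [Fintype F] {a b : F}
    (ha : ¬IsSquare a) (hb : ¬IsSquare b) : IsSquare (a * b) := by
  have ha0 : a ≠ 0 := by rintro rfl; exact ha ⟨0, by ring⟩
  have hb0 : b ≠ 0 := by rintro rfl; exact hb ⟨0, by ring⟩
  classical
  rw [← quadraticChar_one_iff_isSquare (mul_ne_zero ha0 hb0), map_mul,
    quadraticChar_neg_one_iff_not_isSquare.mpr ha, quadraticChar_neg_one_iff_not_isSquare.mpr hb]
  norm_num

lemma FiniteField.exists_eq_mul_sq_mul {F : Type*} [Field F] [Fintype F] {δ b c : F}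
    (hδ : ¬IsSquare δ) (hbc : ¬IsSquare (b * c)) : ∃ s : F, s ≠ 0 ∧ b = δ * s ^ 2 * c := by
  obtain ⟨t, ht⟩ := isSquare_mul_of_not_isSquare hδ hbc
  have hδ0 : δ ≠ 0 := by rintro rfl; exact hδ ⟨0, by ring⟩
  have hc0 : c ≠ 0 := by rintro rfl; exact hbc ⟨0, by ring⟩
  have hb0 : b ≠ 0 := by rintro rfl; exact hbc ⟨0, by ring⟩
  have ht0 : t ≠ 0 := by rintro rfl; simp_all
  refine ⟨t / (δ * c), by simp [ht0, hδ0, hc0], ?_⟩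
  field_simp
  linear_combination ht

namespace Matrix.GeneralLinearGroup

variable {K : Type*} [Field K]

def diagInvOne (s : Kˣ) : GL (Fin 2) K :=
  ⟨!![(s⁻¹ : Kˣ), 0; 0, 1], !![(s : K), 0; 0, 1], by simp [one_fin_two], by simp [one_fin_two]⟩

lemma coe_diagInvOne_conj (s : Kˣ) (g : GL (Fin 2) K) :
    ((diagInvOne s * g * (diagInvOne s)⁻¹ : GL (Fin 2) K) : Matrix (Fin 2) (Fin 2) K) =
      !![g 0 0, s⁻¹ * g 0 1; s * g 1 0, g 1 1] := by
  ext i j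
  fin_cases i <;> fin_cases j <;>
    simp [diagInvOne, mul_apply, vecMul, dotProduct, Fin.sum_univ_two] <;> field_simp

end Matrix.GeneralLinearGroup

open Matrix.GeneralLinearGroup

section

variable {ℓ : ℕ}

lemma mat_mul (g h : GL2 ℓ) : mat (g * h) = mat g * mat h := rfl

lemma IsScalar.isDiag {g : GL2 ℓ} (hg : IsScalar g) : IsDiag g := by
  obtain ⟨c, hc⟩ := hg
  exact ⟨by simp [hc], by simp [hc]⟩

lemma IsScalar.mat_one_one {g : GL2 ℓ} (hg : IsScalar g) : mat g 1 1 = mat g 0 0 := by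
  obtain ⟨c, hc⟩ := hg
  simp [hc]

lemma IsAnti.isDiag_mul {g h : GL2 ℓ} (hg : IsAnti g) (hh : IsAnti h) : IsDiag (g * h) :=
  ⟨by simp [mat_mul, mul_apply, hg.1, hh.2], by simp [mat_mul, mul_apply, hg.2, hh.1]⟩

lemma IsAnti.mat_mul_zero_zero {g h : GL2 ℓ} (hg : IsAnti g) :
    mat (g * h) 0 0 = mat g 0 1 * mat h 1 0 := by
  simp [mat_mul, mul_apply, hg.1]

lemma IsAnti.mat_mul_one_one {g h : GL2 ℓ} (hg : IsAnti g) :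
    mat (g * h) 1 1 = mat g 1 0 * mat h 0 1 := by
  simp [mat_mul, mul_apply, hg.2]

variable [Fact ℓ.Prime]

lemma IsAnti.not_isScalar {g : GL2 ℓ} (hg : IsAnti g) : ¬IsScalar g := fun hs ↦
  g.det_ne_zero <| by
    rw [det_fin_two]
    change mat g 0 0 * mat g 1 1 - mat g 0 1 * mat g 1 0 = 0
    rw [hg.1, hs.isDiag.1]
    ring

lemma IsDiag.isScalar {g : GL2 ℓ} (hloc : IsScalar g ∨ Irreducible (mat g).charpoly)
    (hg : IsDiag g) : IsScalar g :=
  hloc.resolve_right (not_irreducible_charpoly_of_apply_zero_one_eq_zero hg.1)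

lemma IsAnti.not_isSquare_mul {g : GL2 ℓ} (hloc : IsScalar g ∨ Irreducible (mat g).charpoly)
    (hg : IsAnti g) : ¬IsSquare (mat g 0 1 * mat g 1 0) := by
  have h := not_isSquare_neg_det_of_irreducible_charpoly (hloc.resolve_left hg.not_isScalar)
    (by simp [trace_fin_two, hg.1, hg.2])
  simpa [det_fin_two, hg.1] using h

lemma exists_unit_forall_isAnti_mat_zero_one_eq {δ : ZMod ℓ} (hδ : ¬IsSquare δ)
    (G : Subgroup (GL2 ℓ)) (hloc : ∀ g ∈ G, IsScalar g ∨ Irreducible (mat g).charpoly) :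
    ∃ s : (ZMod ℓ)ˣ, ∀ g ∈ G, IsAnti g → mat g 0 1 = δ * s ^ 2 * mat g 1 0 := by
  by_cases hanti : ∃ g₀ ∈ G, IsAnti g₀
  · obtain ⟨g₀, hg₀, ha₀⟩ := hanti
    have hsq := ha₀.not_isSquare_mul (hloc g₀ hg₀)
    obtain ⟨s, hs, hb₀⟩ := FiniteField.exists_eq_mul_sq_mul hδ hsq
    have hc₀ : mat g₀ 1 0 ≠ 0 := fun h ↦ hsq ⟨0, by simp [h]⟩
    refine ⟨Units.mk0 s hs, fun g hg ha ↦ mul_right_cancel₀ hc₀ ?_⟩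
    have hprod := ((ha.isDiag_mul ha₀).isScalar (hloc _ (mul_mem hg hg₀))).mat_one_one
    rw [ha.mat_mul_one_one, ha.mat_mul_zero_zero, hb₀] at hprod
    simp only [Units.val_mk0]
    linear_combination -hprod
  · exact ⟨1, fun g hg ha ↦ (hanti ⟨g, hg, ha⟩).elim⟩

lemma inCns_diagInvOne_conj_iff (δ : ZMod ℓ) (s : (ZMod ℓ)ˣ) (g : GL2 ℓ) :
    InCns δ (diagInvOne s * g * (diagInvOne s)⁻¹) ↔
      mat g 1 1 = mat g 0 0 ∧ mat g 0 1 = δ * s ^ 2 * mat g 1 0 := by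
  simp only [InCns, mat, coe_diagInvOne_conj, of_apply, cons_val', cons_val_zero, cons_val_one,
    empty_val', cons_val_fin_one, Fin.isValue]
  rw [Units.val_inv_eq_inv_val, inv_mul_eq_iff_eq_mul₀ s.ne_zero]
  constructor <;> rintro ⟨h1, h2⟩ <;> exact ⟨h1, by linear_combination h2⟩

end

theorem subgroup_of_Nsp_locally_Cns_is_in_conj_Cns_general
    {ℓ : ℕ} [Fact ℓ.Prime] (δ : ZMod ℓ) (hδ : ¬ IsSquare δ)
    (G : Subgroup (GL2 ℓ)) (hG : ∀ g ∈ G, InNsp g)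
    (hloc : ∀ g ∈ G, IsScalar g ∨ Irreducible (Matrix.charpoly (mat g))) :
    ∃ x : GL2 ℓ, ∀ g ∈ G, InCns δ (x * g * x⁻¹) := by
  obtain ⟨s, hs⟩ := exists_unit_forall_isAnti_mat_zero_one_eq hδ G hloc
  refine ⟨diagInvOne s, fun g hg ↦ (inCns_diagInvOne_conj_iff δ s g).mpr ?_⟩
  rcases hG g hg with hd | ha
  · have hsc := hd.isScalar (hloc g hg)
    exact ⟨hsc.mat_one_one, by rw [hsc.isDiag.1, hsc.isDiag.2, mul_zero]⟩
  · exact ⟨ha.2.trans ha.1.symm, hs g hg ha⟩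

/-- If `G ≤ N_sp` and every element of `G` is scalar or has irreducible
characteristic polynomial, then `G` is contained in a conjugate of `C_ns`. -/
theorem subgroup_of_Nsp_locally_Cns_is_in_conj_Cns
    {ℓ : ℕ} [Fact ℓ.Prime] (hℓ : ℓ ≠ 2) (δ : ZMod ℓ) (hδ : ¬ IsSquare δ)
    (G : Subgroup (GL2 ℓ)) (hG : ∀ g ∈ G, InNsp g)
    (hloc : ∀ g ∈ G, IsScalar g ∨ Irreducible (Matrix.charpoly (mat g))) :
    ∃ x : GL2 ℓ, ∀ g ∈ G, InCns δ (x * g * x⁻¹) :=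
  subgroup_of_Nsp_locally_Cns_is_in_conj_Cns_general δ hδ G hG hloc
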